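/- Let φ be the morphism with φ(0) = φ(2) = 0 and φ(1) = 1. Then φ(vtm) = pd, where pd is the period-doubling word. -/

import Mathlib

/-- The morphism `0 ↦ 012`, `1 ↦ 02`, `2 ↦ 1`. -/
def vtmMu : ℕ → List ℕ
  | 0 => [0, 1, 2]
  | 1 => [0, 2]
  | _ => [1]

/-- Iterates of the morphism on the letter `0`. -/
def vtmIter : ℕ → List ℕ
  | 0 => [0]
  | k + 1 => (vtmIter k).flatMap vtmMu

/-- The ternary squarefree Thue–Morse word. -/
def vtm (n : ℕ) : ℕ := (vtmIter (n + 1)).getD n 0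

/-- The period-doubling morphism `0 ↦ 01`, `1 ↦ 00`. -/
def pdMu : ℕ → List ℕ
  | 0 => [0, 1]
  | _ => [0, 0]

/-- Iterates of the period-doubling morphism on the letter `0`. -/
def pdIter : ℕ → List ℕ
  | 0 => [0]
  | k + 1 => (pdIter k).flatMap pdMu

/-- The period-doubling word, the fixed point of `0 ↦ 01`, `1 ↦ 00`. -/
def pd (n : ℕ) : ℕ := (pdIter (n + 1)).getD n 0

/-- The letter-to-letter morphism `φ` with `φ(0) = φ(2) = 0` and `φ(1) = 1`. -/
def phi (n : ℕ) : ℕ := if n = 1 then 1 else 0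

/-!
Write `μ` for `vtmMu` and `σ` for `pdMu`. Letterwise, `φ μ(0) = σ φ(0) · 0`, `φ μ(2) = 0⁻¹ · σ φ(2)`
and `φ μ(1) = σ φ(1) = 00` commutes with `0`. Hence `φ μ(w) = σ φ(w)` for every word `w` over
`{0, 1, 2}` in which the letters `0` and `2` alternate, starting with `0` and ending with `2`.
Every `μ(a)` is such a word, so `φ μⁿ⁺²(0) = σ φ μⁿ⁺¹(0)`, and from `φ μ(0) = 010 = σ(0) · 0` we get
`φ μⁿ⁺¹(0) = σⁿ⁺¹(0) · σⁿ(0)`, whose first `2ⁿ⁺¹` letters are those of `pd`.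
-/

/-- `ZeroTwoAlternating p w`: in `w` over `{0, 1, 2}` the letters `0` and `2` alternate and the
last one is a `2`; the first one is a `2` if `p` (a `0` read earlier is still awaiting its `2`),
and a `0` otherwise. -/
inductive ZeroTwoAlternating : Bool → List ℕ → Prop
  | nil : ZeroTwoAlternating false []
  | one {p : Bool} {w : List ℕ} : ZeroTwoAlternating p w → ZeroTwoAlternating p (1 :: w)
  | zero {w : List ℕ} : ZeroTwoAlternating true w → ZeroTwoAlternating false (0 :: w)
  | two {w : List ℕ} : ZeroTwoAlternating false w → ZeroTwoAlternating true (2 :: w)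

namespace ZeroTwoAlternating

theorem append {p : Bool} {u v : List ℕ} (hu : ZeroTwoAlternating p u)
    (hv : ZeroTwoAlternating false v) : ZeroTwoAlternating p (u ++ v) := by
  induction hu with
  | nil => exact hv
  | one _ ih => exact one ih
  | zero _ ih => exact zero ih
  | two _ ih => exact two ih

theorem of_vtmMu (a : ℕ) : ZeroTwoAlternating false (vtmMu a) := by
  match a with
  | 0 => exact zero (one (two nil))
  | 1 => exact zero (two nil)
  | _ + 2 => exact one nil

theorem of_flatMap_vtmMu (w : List ℕ) : ZeroTwoAlternating false (w.flatMap vtmMu) := by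
  induction w with
  | nil => exact nil
  | cons a w ih => exact (of_vtmMu a).append ih

theorem map_phi_flatMap_vtmMu {p : Bool} {w : List ℕ} (h : ZeroTwoAlternating p w) :
    (if p then [0] else []) ++ (w.flatMap vtmMu).map phi = (w.map phi).flatMap pdMu := by
  induction h with
  | nil => rfl
  | @one p w _ ih =>
    have hcomm : (if p then [0] else []) ++ [0, 0] = [0, 0] ++ (if p then [0] else []) := by
      cases p <;> rfl
    calc (if p then [0] else []) ++ ((1 :: w).flatMap vtmMu).map phi
        = ((if p then [0] else []) ++ [0, 0]) ++ (w.flatMap vtmMu).map phi := by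
          simp [vtmMu, phi]
      _ = [0, 0] ++ (w.map phi).flatMap pdMu := by rw [hcomm, List.append_assoc, ih]
  | zero _ ih => simpa [vtmMu, phi, pdMu] using ih
  | two _ ih => simpa [vtmMu, phi, pdMu] using ih

end ZeroTwoAlternating

theorem map_phi_vtmIter_succ (k : ℕ) :
    (vtmIter (k + 1)).map phi = pdIter (k + 1) ++ pdIter k := by
  induction k with
  | zero => rfl
  | succ k ih =>
    calc (vtmIter (k + 2)).map phi
        = ((vtmIter (k + 1)).map phi).flatMap pdMu :=
          (ZeroTwoAlternating.of_flatMap_vtmMu (vtmIter k)).map_phi_flatMap_vtmMu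
      _ = pdIter (k + 2) ++ pdIter (k + 1) := by rw [ih, List.flatMap_append]; rfl

theorem length_flatMap_pdMu (w : List ℕ) : (w.flatMap pdMu).length = 2 * w.length := by
  induction w with
  | nil => rfl
  | cons a w ih =>
    have hlen : (pdMu a).length = 2 := by cases a <;> rfl
    rw [List.flatMap_cons, List.length_append, hlen, ih, List.length_cons]
    ring

theorem length_pdIter (k : ℕ) : (pdIter k).length = 2 ^ k := by
  induction k with
  | zero => rfl
  | succ k ih => rw [pdIter, length_flatMap_pdMu, ih, pow_succ']

theorem phi_vtm_eq_pd : ∀ n : ℕ, phi (vtm n) = pd n := by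
  intro n
  have hn : n < (pdIter (n + 1)).length := by
    rw [length_pdIter]
    exact Nat.lt_two_pow_self.trans (Nat.pow_lt_pow_succ one_lt_two)
  calc phi (vtm n) = ((vtmIter (n + 1)).map phi).getD n (phi 0) := (List.getD_map ..).symm
    _ = (pdIter (n + 1) ++ pdIter n).getD n 0 := by rw [map_phi_vtmIter_succ]; rfl
    _ = pd n := List.getD_append _ _ _ _ hn
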